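/- Let f : K → ℝ be centered, ⟨f⟩^s = 0, and suppose there exist a function E : K → ℝ, a function h : K → ℝ, and a subset 𝒟 ⊆ K such that f = LE + h and h(x) = 0 for all x ∉ 𝒟. Then any solution V of LV + f = 0 satisfies, for all x, y ∈ K: |V(x) − V(y)| ≤ |E(x) − E(y)| + ‖h‖ · ∑_{z ∈ 𝒟} ρ^s(z) |τ(x,z) − τ(y,z)|, where ‖h‖ = max_z |h(z)|. -/

import Mathlib

/-!
The generator `L` is linear, so it suffices to find one function `G` with `L G = h`: then
`V + E + G` is `L`-harmonic, hence constant by the maximum principle on the strongly connected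
graph, and `V(x) - V(y) = -(E(x) - E(y)) - (G(x) - G(y))`. Stationarity of `ρˢ` forces
`ρˢ(z) · (L τ(·,z))(x) = δ_{xz} - ρˢ(z)`, so `h`, which is centered because `⟨f⟩ˢ = ⟨LE⟩ˢ = 0`, is the image of
`G(x) = ∑_z ρˢ(z) h(z) τ(x,z)`, whose differences are controlled by `‖h‖` and the sum over the
support `𝒟` of `h`.
-/

open scoped Classical

/-- The backward generator `L` of the Markov jump process with rates `k`:
`L x y = k x y` for `x ≠ y` and `L x x = -∑_{z ≠ x} k x z`. -/
noncomputable def gen {K : Type*} [Fintype K] [DecidableEq K] (k : K → K → ℝ) :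
    Matrix K K ℝ :=
  Matrix.of fun x y => if x = y then -∑ z ∈ Finset.univ.erase x, k x z else k x y

/-- Strong connectivity (irreducibility) of the digraph with an arc `(x,y)` whenever
`k x y > 0`. -/
def StronglyConnected {K : Type*} (k : K → K → ℝ) : Prop :=
  ∀ x y : K, Relation.ReflTransGen (fun a b => 0 < k a b) x y

open Matrix Finset

section Generator

variable {K : Type*} [Fintype K] [DecidableEq K] (k : K → K → ℝ)

theorem gen_mulVec_apply (u : K → ℝ) (x : K) :
    (gen k *ᵥ u) x = ∑ y, k x y * (u y - u x) := by
  rw [mulVec, dotProduct, ← add_sum_erase _ _ (mem_univ x), ← add_sum_erase _ _ (mem_univ x),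
    sum_congr rfl fun y hy => by rw [gen, of_apply, if_neg (ne_of_mem_erase hy).symm]]
  simp only [gen, of_apply, ↓reduceIte, sub_self, mul_zero, zero_add, mul_sub, sum_sub_distrib,
    ← sum_mul]
  ring

theorem dotProduct_gen_mulVec_eq_zero {ρ : K → ℝ} (hρ : vecMul ρ (gen k) = 0) (u : K → ℝ) :
    ρ ⬝ᵥ (gen k *ᵥ u) = 0 := by
  rw [dotProduct_mulVec, hρ, zero_dotProduct]

variable {k}

theorem apply_eq_of_forall_le_of_gen_mulVec_eq_zero {u : K → ℝ} (hk : ∀ x y, x ≠ y → 0 ≤ k x y)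
    (hu : gen k *ᵥ u = 0) {b c : K} (hmax : ∀ z, u z ≤ u b) (hbc : 0 < k b c) :
    u c = u b := by
  have hterm : ∀ z ∈ univ, k b z * (u z - u b) ≤ 0 := fun z _ => by
    rcases eq_or_ne z b with rfl | hz
    · simp
    · exact mul_nonpos_of_nonneg_of_nonpos (hk b z hz.symm) (sub_nonpos.2 (hmax z))
  have hsum : ∑ z, k b z * (u z - u b) = 0 := by rw [← gen_mulVec_apply, hu, Pi.zero_apply]
  have hc := (mul_eq_zero.1 ((sum_eq_zero_iff_of_nonpos hterm).1 hsum c (mem_univ c)))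
  linarith [hc.resolve_left hbc.ne']

theorem apply_eq_of_gen_mulVec_eq_zero (hk : ∀ x y, x ≠ y → 0 ≤ k x y)
    (hirr : StronglyConnected k) {u : K → ℝ} (hu : gen k *ᵥ u = 0) (x y : K) : u x = u y := by
  obtain ⟨b, -, hmax⟩ := exists_max_image univ u ⟨x, mem_univ x⟩
  have hb : ∀ c, u c = u b := fun c => by
    induction hirr b c with
    | refl => rfl
    | tail _ hcd ih =>
      have hmax' : ∀ z, u z ≤ u _ := fun z => ih ▸ hmax z (mem_univ z)
      exact (apply_eq_of_forall_le_of_gen_mulVec_eq_zero hk hu hmax' hcd).trans ih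
  rw [hb x, hb y]

theorem mul_gen_mulVec_firstPassage {ρ : K → ℝ} (hρsum : ∑ x, ρ x = 1)
    (hρ : vecMul ρ (gen k) = 0) {t : K → ℝ} {z : K} (ht : ∀ x, x ≠ z → (gen k *ᵥ t) x = -1)
    (x : K) : ρ z * (gen k *ᵥ t) x = (if x = z then 1 else 0) - ρ z := by
  split_ifs with hxz
  · subst hxz
    have h0 := dotProduct_gen_mulVec_eq_zero k hρ t
    rw [dotProduct, ← add_sum_erase _ _ (mem_univ x),
      sum_congr rfl fun y hy => by rw [ht y (ne_of_mem_erase hy), mul_neg_one], sum_neg_distrib] at h0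
    rw [← add_sum_erase _ _ (mem_univ x)] at hρsum
    linarith
  · rw [ht x hxz]; ring

theorem gen_mulVec_sum_mul_firstPassage {ρ : K → ℝ} (hρsum : ∑ x, ρ x = 1)
    (hρ : vecMul ρ (gen k) = 0) {τ : K → K → ℝ}
    (hτ : ∀ z x, x ≠ z → (gen k *ᵥ fun w => τ w z) x = -1) {h : K → ℝ}
    (hmean : ∑ z, ρ z * h z = 0) :
    gen k *ᵥ (fun x => ∑ z, ρ z * h z * τ x z) = h := by
  ext x
  have hsum : (fun x => ∑ z, ρ z * h z * τ x z) = ∑ z, (ρ z * h z) • fun w => τ w z := by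
    ext; simp only [Finset.sum_apply, Pi.smul_apply, smul_eq_mul]
  rw [hsum, mulVec_sum]
  simp only [mulVec_smul, Finset.sum_apply, Pi.smul_apply, smul_eq_mul]
  calc ∑ z, ρ z * h z * (gen k *ᵥ fun w => τ w z) x
      = ∑ z, ((if x = z then 1 else 0) - ρ z) * h z := sum_congr rfl fun z _ => by
        rw [← mul_gen_mulVec_firstPassage hρsum hρ (hτ z)]; ring
    _ = ∑ z, (if x = z then h z else 0) - ∑ z, ρ z * h z := by
        simp only [sub_mul, sum_sub_distrib, ite_mul, one_mul, zero_mul]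
    _ = h x := by rw [sum_ite_eq, if_pos (mem_univ x), hmean, sub_zero]

end Generator

theorem abs_sum_mul_le_sup'_mul {K : Type*} [Fintype K] [Nonempty K] (s : Finset K)
    (h w : K → ℝ) :
    |∑ z ∈ s, h z * w z| ≤ (univ.sup' univ_nonempty fun z => |h z|) * ∑ z ∈ s, |w z| := by
  rw [mul_sum]
  refine (abs_sum_le_sum_abs _ _).trans (sum_le_sum fun z _ => ?_)
  rw [abs_mul]
  exact mul_le_mul_of_nonneg_right (le_sup' (fun z => |h z|) (mem_univ z)) (abs_nonneg _)

theorem quasipotential_difference_refined_bound_general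
    {K : Type*} [Fintype K] [DecidableEq K] [Nonempty K]
    (k : K → K → ℝ) (hk : ∀ x y : K, x ≠ y → 0 ≤ k x y)
    (hirr : StronglyConnected k)
    (ρ : K → ℝ) (hρpos : ∀ x, 0 < ρ x) (hρsum : ∑ x, ρ x = 1)
    (hρstat : Matrix.vecMul ρ (gen k) = 0)
    (τ : K → K → ℝ)
    (hτ : ∀ z x, x ≠ z → (∑ y, k x y * (τ y z - τ x z)) + 1 = 0)
    (f : K → ℝ) (hf : ∑ x, f x * ρ x = 0)
    (𝒟 : Finset K) (E h : K → ℝ)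
    (hfEh : ∀ x, f x = (∑ y, k x y * (E y - E x)) + h x)
    (hsupp : ∀ x ∉ 𝒟, h x = 0)
    (V : K → ℝ) (hV : ∀ x, (∑ y, k x y * (V y - V x)) + f x = 0) :
    ∀ x y, |V x - V y| ≤ |E x - E y| +
      (Finset.univ.sup' Finset.univ_nonempty fun z => |h z|) *
        ∑ z ∈ 𝒟, ρ z * |τ x z - τ y z| := by
  intro x y
  simp only [← gen_mulVec_apply] at hV hfEh hτ
  have hmean : ∑ z, ρ z * h z = 0 :=
    calc ∑ z, ρ z * h z = ∑ z, f z * ρ z - ρ ⬝ᵥ (gen k *ᵥ E) := by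
          rw [dotProduct, ← sum_sub_distrib]
          exact sum_congr rfl fun z _ => by rw [hfEh z]; ring
      _ = 0 := by rw [hf, dotProduct_gen_mulVec_eq_zero k hρstat, sub_zero]
  set G : K → ℝ := fun x => ∑ z, ρ z * h z * τ x z
  have hG : gen k *ᵥ G = h :=
    gen_mulVec_sum_mul_firstPassage hρsum hρstat (fun z x hx => by linarith [hτ z x hx]) hmean
  have hconst := apply_eq_of_gen_mulVec_eq_zero hk hirr (u := V + E + G) (by
    ext z
    rw [mulVec_add, mulVec_add, Pi.add_apply, Pi.add_apply, hG, Pi.zero_apply]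
    linarith [hV z, hfEh z]) x y
  have hGdiff : G x - G y = ∑ z ∈ 𝒟, h z * (ρ z * (τ x z - τ y z)) := by
    rw [← sum_sub_distrib, ← sum_subset (subset_univ 𝒟) fun z _ hz => by rw [hsupp z hz]; ring]
    exact sum_congr rfl fun z _ => by ring
  calc |V x - V y| = |-(E x - E y) - (G x - G y)| := by
        congr 1; simp only [Pi.add_apply] at hconst; linarith
    _ ≤ |E x - E y| + |G x - G y| := by rw [← abs_neg (E x - E y)]; exact abs_sub _ _
    _ ≤ _ := by
        gcongr
        rw [hGdiff]
        refine (abs_sum_mul_le_sup'_mul 𝒟 h _).trans_eq ?_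
        congr 1
        exact sum_congr rfl fun z _ => by rw [abs_mul, abs_of_pos (hρpos z)]

/-- Refined bound: if `f = LE + h` with `h` supported in `𝒟`, then any solution `V` of
`LV + f = 0` satisfies
`|V(x) - V(y)| ≤ |E(x) - E(y)| + ‖h‖ ∑_{z ∈ 𝒟} ρˢ(z) |τ(x,z) - τ(y,z)|`. -/
theorem quasipotential_difference_refined_bound
    {K : Type*} [Fintype K] [DecidableEq K] [Nonempty K]
    (k : K → K → ℝ) (hk : ∀ x y : K, x ≠ y → 0 ≤ k x y)
    (hirr : StronglyConnected k)
    (ρ : K → ℝ) (hρpos : ∀ x, 0 < ρ x) (hρsum : ∑ x, ρ x = 1)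
    (hρstat : Matrix.vecMul ρ (gen k) = 0)
    (τ : K → K → ℝ) (hτ0 : ∀ z, τ z z = 0)
    (hτ : ∀ z x, x ≠ z → (∑ y, k x y * (τ y z - τ x z)) + 1 = 0)
    (f : K → ℝ) (hf : ∑ x, f x * ρ x = 0)
    (𝒟 : Finset K) (E h : K → ℝ)
    (hfEh : ∀ x, f x = (∑ y, k x y * (E y - E x)) + h x)
    (hsupp : ∀ x ∉ 𝒟, h x = 0)
    (V : K → ℝ) (hV : ∀ x, (∑ y, k x y * (V y - V x)) + f x = 0) :
    ∀ x y, |V x - V y| ≤ |E x - E y| +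
      (Finset.univ.sup' Finset.univ_nonempty fun z => |h z|) *
        ∑ z ∈ 𝒟, ρ z * |τ x z - τ y z| :=
  quasipotential_difference_refined_bound_general k hk hirr ρ hρpos hρsum hρstat τ hτ f hf 𝒟 E h
    hfEh hsupp V hV
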